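/- arXiv:1007.2598 — 8 statements merged into one kernel-verified Lean document; each statement's English description precedes it below -/
import Mathlib

section
/- If F is a finitely generated free group and N < F is a characteristic subgroup of finite index, then the restriction map Aut(F) → Aut(N) is injective. -/
/-- Every `x` has a positive power `x ^ n` in `N`, and `n`-th roots are unique in a torsion-free
monoid. -/
theorem MonoidHom.eq_of_eqOn_finiteIndex {G M : Type*} [Group G] [Monoid M] [IsMulTorsionFree M]
    (N : Subgroup G) [N.FiniteIndex] {f g : G →* M} (h : ∀ x ∈ N, f x = g x) : f = g := by
  ext x
  obtain ⟨n, hn, -, hxn⟩ := N.exists_pow_mem_of_index_ne_zero Subgroup.FiniteIndex.index_ne_zero x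
  apply pow_left_injective hn.ne'
  simpa only [map_pow] using h _ hxn

theorem restriction_to_characteristic_finite_index_subgroup_injective_general
    (α : Type) (N : Subgroup (FreeGroup α)) [N.FiniteIndex]
    (φ ψ : FreeGroup α ≃* FreeGroup α) (h : ∀ x ∈ N, φ x = ψ x) : φ = ψ :=
  MulEquiv.toMonoidHom_injective (MonoidHom.eq_of_eqOn_finiteIndex N h)

/-- If `F` is a finitely generated free group and `N < F` is a characteristic subgroup of
finite index, then the restriction map `Aut(F) → Aut(N)` is injective: two automorphisms of
`F` agreeing on `N` are equal. -/
theorem restriction_to_characteristic_finite_index_subgroup_injective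
    (α : Type) [Finite α] (N : Subgroup (FreeGroup α)) [N.Characteristic] [N.FiniteIndex]
    (φ ψ : FreeGroup α ≃* FreeGroup α) (h : ∀ x ∈ N, φ x = ψ x) : φ = ψ :=
  restriction_to_characteristic_finite_index_subgroup_injective_general α N φ ψ h
end

section
/- In a free group F, if x^k = y^k for some k ≥ 1 and x, y ∈ F, then x = y (elements of free groups have unique k-th roots). -/
/-- In a free group, elements have unique `k`-th roots: if `x ^ k = y ^ k` with `k ≥ 1`,
then `x = y`. -/
theorem freeGroup_unique_roots (α : Type) (x y : FreeGroup α) (k : ℕ) (hk : 1 ≤ k)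
    (h : x ^ k = y ^ k) : x = y :=
  pow_left_injective (Nat.one_le_iff_ne_zero.mp hk) h
end

section
/- If N is a finite-index subgroup of a free group F of rank n, with index d, then N is a free group of rank d(n-1)+1. -/
/-!
Count functors into the group `Q = ℤ/2`. The subgroup `N` is the vertex group of the action
groupoid of `G` on `G ⧸ N`, a connected free groupoid with `d` vertices and `n d` generating
arrows, so there are `|Q| ^ (n d)` such functors. On the other hand, after fixing an arrow from
the root to every other vertex, a functor from a connected groupoid is the same as a homomorphism
from the root vertex group together with arbitrary values on the `d - 1` chosen arrows. Since `N`
is free (Nielsen–Schreier), `|Hom(N, Q)| = |Q| ^ rank N`, hence `rank N + d - 1 = n d`.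
-/

open CategoryTheory

universe u v

namespace CategoryTheory.Groupoid

variable {G : Type*} [Groupoid G] {Q : Type*} [Group Q] {r : G}

def functorOfEndHom (t : ∀ v, r ⟶ v) (φ : End r →* Q) (q : G → Q) : G ⥤ SingleObj Q where
  obj _ := SingleObj.star Q
  map {a b} p := q b * φ (t a ≫ p ≫ Groupoid.inv (t b)) * (q a)⁻¹
  map_id a := by
    rw [Category.id_comp, Groupoid.comp_inv, ← End.one_def, map_one, mul_one, mul_inv_cancel,
      SingleObj.id_as_one]
  map_comp {a b c} p p' := by
    have h : φ (t a ≫ (p ≫ p') ≫ Groupoid.inv (t c)) =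
        φ (t b ≫ p' ≫ Groupoid.inv (t c)) * φ (t a ≫ p ≫ Groupoid.inv (t b)) := by
      rw [← map_mul, End.mul_def]
      simp
    rw [h, SingleObj.comp_as_mul]
    group

def functorEquivEndHomProd [DecidableEq G] (t : ∀ v, r ⟶ v) (ht : t r = 𝟙 r) :
    (G ⥤ SingleObj Q) ≃ (End r →* Q) × ({v // v ≠ r} → Q) where
  toFun F :=
    ({ toFun := F.map, map_one' := F.map_id r, map_mul' := fun p p' => F.map_comp p' p },
      fun v => F.map (t v))
  invFun x := functorOfEndHom t x.1 (fun v => if h : v = r then 1 else x.2 ⟨v, h⟩)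
  left_inv F := by
    have hq : ∀ v, (if h : v = r then 1 else F.map (t v)) = F.map (t v) := by
      intro v
      split_ifs with h
      · subst h
        rw [ht, F.map_id]
        rfl
      · rfl
    refine Functor.hext (fun _ => Subsingleton.elim _ _) (fun a b p => heq_of_eq ?_)
    simp only [functorOfEndHom, hq, MonoidHom.coe_mk, OneHom.coe_mk, F.map_comp,
      SingleObj.comp_as_mul, Groupoid.inv_eq_inv, Functor.map_inv, SingleObj.inv_as_inv]
    group
  right_inv x := by
    refine Prod.ext (MonoidHom.ext fun p => ?_) (funext fun v => ?_)
    · simp [functorOfEndHom, ht]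
    · simpa [functorOfEndHom, ht, v.2] using x.1.map_one

theorem card_functor_singleObj [IsPreconnected G] [Finite G] (r : G) :
    Nat.card (G ⥤ SingleObj Q) = Nat.card (End r →* Q) * Nat.card Q ^ Nat.card {v // v ≠ r} := by
  classical
  let t (v : G) : r ⟶ v :=
    if h : r = v then eqToHom h else (nonempty_hom_of_preconnected_groupoid r v).some
  have ht : t r = 𝟙 r := by simp [t]
  rw [Nat.card_congr (functorEquivEndHomProd t ht), Nat.card_prod, Nat.card_fun]

end CategoryTheory.Groupoid

def Quiver.labellingEquivTotal (V : Type*) [Quiver V] (L : Sort*) :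
    Labelling V L ≃ (Total V → L) where
  toFun f e := f e.hom
  invFun g _ _ e := g ⟨_, _, e⟩
  left_inv _ := rfl
  right_inv _ := rfl

namespace IsFreeGroupoid

noncomputable def functorEquivLabelling (G : Type u) [Groupoid.{v} G] [IsFreeGroupoid G]
    (X : Type v) [Group X] : (G ⥤ SingleObj X) ≃ Quiver.Labelling (Generators G) X :=
  Equiv.ofBijective (fun F _ _ e => F.map (of e))
    ⟨fun F F' h => ext_functor F F' fun a b e => congr_fun (congr_fun (congr_fun h a) b) e,
      fun f => (unique_lift f).exists.imp fun _ hF => funext₂ fun a b => funext (hF a b)⟩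

theorem card_functor_singleObj {G : Type u} [Groupoid.{v} G] [IsFreeGroupoid G]
    [Finite (Quiver.Total (Generators G))] (X : Type v) [Group X] :
    Nat.card (G ⥤ SingleObj X) = Nat.card X ^ Nat.card (Quiver.Total (Generators G)) := by
  rw [Nat.card_congr ((functorEquivLabelling G X).trans (Quiver.labellingEquivTotal _ X)),
    Nat.card_fun]

theorem exists_end_mulEquiv_freeGroup {G : Type u} [Groupoid.{u} G] [IsFreeGroupoid G]
    [hconn : IsConnected G] [Finite G] [Finite (Quiver.Total (Generators G))] (r : G) :
    ∃ m : ℕ, Nonempty (End r ≃* FreeGroup (Fin m)) ∧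
      m + Nat.card G = Nat.card (Quiver.Total (Generators G)) + 1 := by
  classical
  let X := IsFreeGroup.Generators (End r)
  let Q := ULift.{u} (Multiplicative (ZMod 2))
  have hQ : Nat.card Q = 2 := (Nat.card_ulift _).trans (Nat.card_zmod 2)
  have hcount : Nat.card (X → Q) * 2 ^ Nat.card {v // v ≠ r} =
      2 ^ Nat.card (Quiver.Total (Generators G)) := by
    rw [← hQ, ← card_functor_singleObj, Groupoid.card_functor_singleObj r,
      Nat.card_congr IsFreeGroup.lift]
  have : Finite (X → Q) := Nat.finite_of_card_ne_zero fun h => by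
    rw [h, zero_mul] at hcount
    exact pow_ne_zero _ two_ne_zero hcount.symm
  have : Finite X := by
    by_contra hX
    have := not_finite_iff_infinite.mp hX
    exact not_finite (X → Q)
  refine ⟨Nat.card X, ⟨(IsFreeGroup.toFreeGroup (End r)).trans
    (FreeGroup.freeGroupCongr (Finite.equivFin X))⟩, ?_⟩
  rw [Nat.card_fun, hQ, ← pow_add] at hcount
  have hV : Nat.card {v // v ≠ r} + 1 = Nat.card G := by
    rw [← Finite.card_option, Nat.card_congr (Equiv.optionSubtypeNe r)]
  rw [← hV, ← Nat.pow_right_injective le_rfl hcount]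
  omega

noncomputable def totalGeneratorsActionCategoryEquiv (G A : Type u) [Group G] [IsFreeGroup G]
    [MulAction G A] :
    Quiver.Total (Generators (ActionCategory G A)) ≃ IsFreeGroup.Generators G × A where
  toFun e := (e.hom.val, (show ActionCategory G A from e.left).back)
  invFun p := ⟨ActionCategory.objEquiv G A p.2,
    ActionCategory.objEquiv G A (IsFreeGroup.of p.1 • p.2), ⟨p.1, rfl⟩⟩
  left_inv := by
    rintro ⟨⟨⟨⟩, a⟩, ⟨⟨⟩, b⟩, ⟨e, h⟩⟩
    cases h
    rfl
  right_inv _ := rfl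

end IsFreeGroupoid

open IsFreeGroupoid in
/-- Nielsen–Schreier index formula: a subgroup of index `d` in a free group of rank `n`
is free of rank `d(n-1) + 1`. -/
theorem nielsen_schreier_index_formula (n d : ℕ) (hd : 0 < d)
    (G : Type) [Group G] (hG : Nonempty (G ≃* FreeGroup (Fin n)))
    (N : Subgroup G) (hN : N.index = d) :
    ∃ m : ℕ, Nonempty (N ≃* FreeGroup (Fin m)) ∧ (m : ℤ) = d * ((n : ℤ) - 1) + 1 := by
  obtain ⟨e⟩ := hG
  have : IsFreeGroup G := IsFreeGroup.ofMulEquiv e.symm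
  have hA : Nat.card (G ⧸ N) = d := hN
  have : Finite (G ⧸ N) := Nat.finite_of_card_ne_zero (hA.trans_ne hd.ne')
  let totalEquiv := (totalGeneratorsActionCategoryEquiv G (G ⧸ N)).trans
    ((Equiv.ofFreeGroupEquiv ((IsFreeGroup.toFreeGroup G).symm.trans e)).prodCongr
      (.refl _))
  have : Finite (ActionCategory G (G ⧸ N)) := Finite.of_equiv _ (ActionCategory.objEquiv G _)
  have : Finite (Quiver.Total (Generators (ActionCategory G (G ⧸ N)))) :=
    Finite.of_equiv _ totalEquiv.symm
  -- Instance search finds connectedness only for the category structure of `ActionCategory`,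
  -- not for the one induced by its groupoid structure; the two agree up to unfolding.
  have hconn : IsConnected (ActionCategory G (G ⧸ N)) := inferInstance
  obtain ⟨m, ⟨f⟩, hm⟩ :=
    exists_end_mulEquiv_freeGroup (hconn := hconn) (ActionCategory.objEquiv G _ (1 : G))
  refine ⟨m, ⟨(ActionCategory.endMulEquivSubgroup N).symm.trans f⟩, ?_⟩
  rw [Nat.card_congr totalEquiv, Nat.card_prod, Nat.card_fin, hA,
    ← Nat.card_congr (ActionCategory.objEquiv G _), hA] at hm
  have hm' : (m : ℤ) + d = n * d + 1 := by exact_mod_cast hm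
  linear_combination hm'
end

section
/- The limit as x → ∞ of (1/x)·∑_{k=2}^{x} f(k) exists and equals C = ∑_p (p−1)/Q(p), where the sum ranges over all primes p, f(k) is the smallest prime not dividing k, and Q(p) is the product of all primes strictly less than p (Q(2)=1). -/
/-- `leastNonDivPrime k` is the smallest prime which does not divide `k`. -/
noncomputable def leastNonDivPrime (k : ℕ) : ℕ := sInf {p : ℕ | p.Prime ∧ ¬ p ∣ k}

/-- `primorialBelow p` is the product of all primes strictly less than `p`
(so `primorialBelow 2 = 1`). -/
def primorialBelow (p : ℕ) : ℕ := ∏ q ∈ (Finset.range p).filter Nat.Prime, q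

/-!
`leastNonDivPrime k = p` exactly when `primorialBelow p ∣ k` and `p ∤ k`, so among `1, …, x`
there are `⌊x / Q(p)⌋ - ⌊x / (p Q(p))⌋` such `k`, and the average of `f` over `(0, x]` is the
sum over primes of `p (⌊x / Q(p)⌋ - ⌊x / (p Q(p))⌋) / x`. Each term tends to `(p - 1) / Q(p)`
and is at most `p / Q(p) ≤ 21 / p²`, because Bertrand's postulate gives `p³ ≤ 21 Q(p)`;
dominated convergence lets the limit pass inside the sum.
-/

open Finset Filter Topology

lemma sum_comp_eq_tsum_card_smul {ι M : Type*} [AddCommMonoid M] [TopologicalSpace M]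
    [T2Space M] [ContinuousAdd M] (s : Finset ι) {g : ι → ℕ} (hg : ∀ i ∈ s, (g i).Prime)
    (f : ℕ → M) :
    ∑ i ∈ s, f (g i) = ∑' p : Nat.Primes, #{i ∈ s | g i = p} • f p := by
  classical
  have hsingle : ∀ i ∈ s,
      HasSum (fun p : Nat.Primes => if g i = p then f p else 0) (f (g i)) := by
    intro i hi
    simpa using hasSum_single (f := fun p : Nat.Primes => if g i = p then f p else 0)
      ⟨g i, hg i hi⟩ fun p hp => if_neg fun h => hp (Subtype.ext h.symm)
  calc ∑ i ∈ s, f (g i) = ∑ i ∈ s, ∑' p : Nat.Primes, if g i = p then f p else 0 :=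
        sum_congr rfl fun i hi => (hsingle i hi).tsum_eq.symm
    _ = ∑' p : Nat.Primes, ∑ i ∈ s, if g i = p then f p else 0 :=
        (Summable.tsum_finsetSum fun i hi => (hsingle i hi).summable).symm
    _ = _ := by simp only [← sum_filter, sum_const]

lemma tendsto_nat_div_div_atTop (d : ℕ) :
    Tendsto (fun x : ℕ => ((x / d : ℕ) : ℝ) / x) atTop (𝓝 (1 / d)) := by
  refine ((tendsto_nat_floor_mul_div_atTop (R := ℝ) (a := 1 / d) (by positivity)).comp
    tendsto_natCast_atTop_atTop).congr fun x => ?_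
  rw [Function.comp_apply, one_div_mul_eq_div, Nat.floor_div_eq_div]

lemma primorialBelow_pos (p : ℕ) : 0 < primorialBelow p :=
  prod_pos fun _ hq => (mem_filter.1 hq).2.pos

lemma Nat.Prime.dvd_primorialBelow_iff {q p : ℕ} (hq : q.Prime) :
    q ∣ primorialBelow p ↔ q < p := by
  cases p with
  | zero => simp [primorialBelow, hq.ne_one]
  | succ n => exact hq.dvd_primorial_iff.trans Nat.lt_succ_iff.symm

lemma primorialBelow_dvd_iff {p k : ℕ} :
    primorialBelow p ∣ k ↔ ∀ q, q.Prime → q < p → q ∣ k := by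
  refine ⟨fun h q hq hqp => ((hq.dvd_primorialBelow_iff).2 hqp).trans h, fun h => ?_⟩
  refine prod_primes_dvd _ (fun q hq => (mem_filter.1 hq).2.prime) fun q hq => ?_
  rw [mem_filter, mem_range] at hq
  exact h q hq.2 hq.1

lemma primorialBelow_mono : Monotone primorialBelow := fun _ _ h =>
  prod_le_prod_of_subset_of_one_le' (filter_subset_filter _ (range_mono h))
    fun _ hq _ => (mem_filter.1 hq).2.one_lt.le

lemma primorialBelow_succ {q : ℕ} (hq : q.Prime) :
    primorialBelow (q + 1) = q * primorialBelow q := by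
  rw [primorialBelow, primorialBelow, range_add_one, filter_insert, if_pos hq,
    prod_insert (by simp)]

lemma pow_three_le_primorialBelow {p : ℕ} (hp : p.Prime) : p ^ 3 ≤ 21 * primorialBelow p := by
  induction p using Nat.strong_induction_on with
  | _ p ih =>
  by_cases hsmall : p < 17
  · interval_cases p <;> first | exact absurd hp (by decide) | decide
  -- Bertrand: `Q(p) ≥ q Q(q)` for a prime `q` with `p ≤ 2q`; the constant 21 is forced by `p = 5`.
  obtain ⟨q, hq, hpq, hqp⟩ := Nat.exists_prime_lt_and_le_two_mul ((p - 1) / 2) (by omega)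
  have hQ : q * primorialBelow q ≤ primorialBelow p :=
    primorialBelow_succ hq ▸ primorialBelow_mono (by omega)
  have hq3 := ih q (by omega) hq
  calc p ^ 3 ≤ (2 * q) ^ 3 := by gcongr; omega
    _ = q * (8 * q ^ 2) := by ring
    _ ≤ q * q ^ 3 := by gcongr; nlinarith [Nat.mul_le_mul_right (q ^ 2) (show 8 ≤ q by omega)]
    _ ≤ 21 * (q * primorialBelow q) := by nlinarith
    _ ≤ 21 * primorialBelow p := by gcongr

lemma leastNonDivPrime_spec {k : ℕ} (hk : k ≠ 0) :
    (leastNonDivPrime k).Prime ∧ ¬ leastNonDivPrime k ∣ k := by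
  obtain ⟨p, hkp, hp⟩ := Nat.exists_infinite_primes (k + 1)
  exact Nat.sInf_mem (s := {p : ℕ | p.Prime ∧ ¬ p ∣ k})
    ⟨p, hp, fun h => by have := Nat.le_of_dvd (Nat.pos_of_ne_zero hk) h; omega⟩

lemma leastNonDivPrime_le {k p : ℕ} (hp : p.Prime) (hpk : ¬ p ∣ k) : leastNonDivPrime k ≤ p :=
  Nat.sInf_le ⟨hp, hpk⟩

lemma leastNonDivPrime_eq_iff {k p : ℕ} (hk : k ≠ 0) (hp : p.Prime) :
    leastNonDivPrime k = p ↔ primorialBelow p ∣ k ∧ ¬ p ∣ k := by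
  obtain ⟨hq, hqk⟩ := leastNonDivPrime_spec hk
  rw [primorialBelow_dvd_iff]
  constructor
  · rintro rfl
    exact ⟨fun r hr hlt => by_contra fun h => (leastNonDivPrime_le hr h).not_gt hlt, hqk⟩
  · rintro ⟨hdvd, hpk⟩
    exact le_antisymm (leastNonDivPrime_le hp hpk) (not_lt.1 fun hlt => hqk (hdvd _ hq hlt))

lemma leastNonDivPrime_one : leastNonDivPrime 1 = 2 :=
  (leastNonDivPrime_eq_iff one_ne_zero Nat.prime_two).2 (by decide)

lemma card_filter_leastNonDivPrime_eq {p : ℕ} (hp : p.Prime) (x : ℕ) :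
    #{k ∈ Ioc 0 x | leastNonDivPrime k = p} =
      x / primorialBelow p - x / (p * primorialBelow p) := by
  have hcop : p.Coprime (primorialBelow p) :=
    hp.coprime_iff_not_dvd.2 (hp.dvd_primorialBelow_iff.not.2 (lt_irrefl p))
  have hfiber : {k ∈ Ioc 0 x | leastNonDivPrime k = p} =
      {k ∈ Ioc 0 x | primorialBelow p ∣ k} \ {k ∈ Ioc 0 x | p * primorialBelow p ∣ k} := by
    ext k
    simp only [mem_filter, Finset.mem_sdiff, mem_Ioc]
    constructor
    · rintro ⟨hkx, hk⟩
      rw [leastNonDivPrime_eq_iff (by omega) hp] at hk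
      exact ⟨⟨hkx, hk.1⟩, fun ⟨_, h⟩ => hk.2 (dvd_of_mul_right_dvd h)⟩
    · rintro ⟨⟨hkx, hQ⟩, hpQ⟩
      refine ⟨hkx, (leastNonDivPrime_eq_iff (by omega) hp).2 ⟨hQ, fun hpk => ?_⟩⟩
      exact hpQ ⟨hkx, hcop.mul_dvd_of_dvd_of_dvd hpk hQ⟩
  rw [hfiber, card_sdiff_of_subset (monotone_filter_right _ fun _ _ => dvd_of_mul_left_dvd),
    Nat.Ioc_filter_dvd_card_eq_div, Nat.Ioc_filter_dvd_card_eq_div]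

lemma summable_div_primorialBelow :
    Summable fun p : Nat.Primes => ((p : ℕ) : ℝ) / primorialBelow p := by
  have hsq : Summable fun n : ℕ => 21 / (n : ℝ) ^ 2 := by
    simpa [div_eq_mul_inv] using (Real.summable_one_div_nat_pow.2 one_lt_two).mul_left 21
  refine Summable.of_nonneg_of_le (fun _ => by positivity) (fun p => ?_) (hsq.subtype {p | p.Prime})
  have hp : (0 : ℝ) < (p : ℕ) := by exact_mod_cast p.2.pos
  have hQ : (0 : ℝ) < primorialBelow p := by exact_mod_cast primorialBelow_pos p
  have hcube : ((p : ℕ) : ℝ) ^ 3 ≤ 21 * primorialBelow p := by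
    exact_mod_cast pow_three_le_primorialBelow p.2
  show ((p : ℕ) : ℝ) / primorialBelow p ≤ 21 / ((p : ℕ) : ℝ) ^ 2
  rw [div_le_div_iff₀ hQ (by positivity)]
  nlinarith

noncomputable def leastNonDivPrimeShare (x p : ℕ) : ℝ :=
  p * #{k ∈ Ioc 0 x | leastNonDivPrime k = p} / x

lemma sum_leastNonDivPrime_div_eq_tsum (x : ℕ) :
    (∑ k ∈ Ioc 0 x, (leastNonDivPrime k : ℝ)) / x =
      ∑' p : Nat.Primes, leastNonDivPrimeShare x p := by
  have hprime : ∀ k ∈ Ioc 0 x, (leastNonDivPrime k).Prime := fun k hk =>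
    (leastNonDivPrime_spec (mem_Ioc.1 hk).1.ne').1
  rw [sum_comp_eq_tsum_card_smul (Ioc 0 x) hprime Nat.cast, ← tsum_div_const]
  simp only [leastNonDivPrimeShare, nsmul_eq_mul, mul_comm]

lemma tendsto_leastNonDivPrimeShare {p : ℕ} (hp : p.Prime) :
    Tendsto (fun x => leastNonDivPrimeShare x p) atTop
      (𝓝 (((p : ℝ) - 1) / primorialBelow p)) := by
  have hQ := primorialBelow_pos p
  have h := ((tendsto_nat_div_div_atTop (primorialBelow p)).sub
    (tendsto_nat_div_div_atTop (p * primorialBelow p))).const_mul (p : ℝ)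
  convert h using 1
  · funext x
    rw [leastNonDivPrimeShare, card_filter_leastNonDivPrime_eq hp,
      Nat.cast_sub (Nat.div_le_div_left (Nat.le_mul_of_pos_left _ hp.pos) hQ)]
    ring
  · have : (p : ℝ) ≠ 0 := by exact_mod_cast hp.ne_zero
    push_cast
    field_simp

lemma leastNonDivPrimeShare_nonneg (x p : ℕ) : 0 ≤ leastNonDivPrimeShare x p := by
  unfold leastNonDivPrimeShare
  positivity

lemma leastNonDivPrimeShare_le (x : ℕ) {p : ℕ} (hp : p.Prime) :
    leastNonDivPrimeShare x p ≤ p / primorialBelow p := by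
  rcases Nat.eq_zero_or_pos x with rfl | hx
  · simp [leastNonDivPrimeShare]
    positivity
  have hcard : (#{k ∈ Ioc 0 x | leastNonDivPrime k = p} : ℝ) ≤ x / primorialBelow p := by
    rw [card_filter_leastNonDivPrime_eq hp]
    exact (Nat.cast_le.2 (Nat.sub_le _ _)).trans Nat.cast_div_le
  calc leastNonDivPrimeShare x p ≤ p * (x / primorialBelow p) / x := by
        unfold leastNonDivPrimeShare; gcongr
    _ = p / primorialBelow p := by field_simp

/-- The expected value of `f(k)`, the smallest prime not dividing `k`, exists and equals
`C = ∑_p (p−1)/Q(p)`. -/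
theorem expected_value_leastNonDivPrime :
    Filter.Tendsto
      (fun x : ℕ => (∑ k ∈ Finset.Icc 2 x, (leastNonDivPrime k : ℝ)) / (x : ℝ))
      Filter.atTop
      (nhds (∑' p : Nat.Primes, (((p : ℕ) : ℝ) - 1) / (primorialBelow (p : ℕ) : ℝ))) := by
  have hshares : Tendsto (fun x : ℕ => ∑' p : Nat.Primes, leastNonDivPrimeShare x p) atTop
      (𝓝 (∑' p : Nat.Primes, (((p : ℕ) : ℝ) - 1) / primorialBelow p)) :=
    tendsto_tsum_of_dominated_convergence summable_div_primorialBelow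
      (fun p => tendsto_leastNonDivPrimeShare p.2) <| .of_forall fun x p => by
        rw [Real.norm_of_nonneg (leastNonDivPrimeShare_nonneg x p)]
        exact leastNonDivPrimeShare_le x p.2
  have hlim := hshares.sub (tendsto_const_div_atTop_nhds_zero_nat (2 : ℝ))
  rw [sub_zero] at hlim
  refine hlim.congr' ?_
  filter_upwards [eventually_ge_atTop 1] with x hx
  have hsplit : Ioc 0 x = insert 1 (Icc 2 x) := by
    rw [← insert_Ioc_add_one_left_eq_Ioc (by omega), ← Icc_add_one_left_eq_Ioc]
    rfl
  rw [← sum_leastNonDivPrime_div_eq_tsum, hsplit, sum_insert (by simp), leastNonDivPrime_one,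
    Nat.cast_ofNat, add_div, add_sub_cancel_left]
end

section
/- The semidirect product Z^{n−1} ⋊_ψ Z, where ψ is the automorphism of Z^{n−1} cyclically permuting a free basis, is torsion-free. -/
/-! The projection onto `ℤ` sends an element of finite order to `0`, so such an element lies in
`ℤ^{n-1}`, which is torsion-free. The same argument shows that a semidirect product of
torsion-free groups is torsion-free, whatever the action. -/

/-- The automorphism of `ℤ^m` cyclically permuting the standard basis. -/
def cycShift (m : ℕ) : (Fin m → ℤ) ≃+ (Fin m → ℤ) :=
  { Equiv.arrowCongr (finRotate m) (Equiv.refl ℤ) with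
    map_add' := fun _ _ => rfl }

/-- A monoid is torsion-free if no element other than the identity has finite order
(the definition `Monoid.IsTorsionFree` of the older Mathlib, since removed). -/
def Monoid.IsTorsionFree (G : Type*) [Monoid G] : Prop :=
  ∀ g : G, g ≠ 1 → ¬IsOfFinOrder g

theorem Monoid.isTorsionFree_of_isMulTorsionFree (G : Type*) [Monoid G] [IsMulTorsionFree G] :
    Monoid.IsTorsionFree G :=
  fun _ hg hfin => hg hfin.eq_one'

namespace SemidirectProduct

variable {N G : Type*} [Group N] [Group G] {φ : G →* MulAut N}

theorem isTorsionFree (hN : Monoid.IsTorsionFree N) (hG : Monoid.IsTorsionFree G) :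
    Monoid.IsTorsionFree (N ⋊[φ] G) := by
  intro g hg hfin
  have hright : g.right = 1 := by_contra fun h => hG _ h (rightHom.isOfFinOrder hfin)
  have hg_eq : g = inl g.left := by ext <;> simp [hright]
  have hleft : g.left = 1 := by_contra fun h =>
    hN _ h (inl_injective.isOfFinOrder_iff.mp (hg_eq ▸ hfin))
  exact hg (by rw [hg_eq, hleft, map_one])

end SemidirectProduct

theorem semidirect_cyclic_shift_torsionFree_general (n : ℕ) :
    Monoid.IsTorsionFree
      (SemidirectProduct (Multiplicative (Fin (n - 1) → ℤ)) (Multiplicative ℤ)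
        (zpowersHom _ (AddEquiv.toMultiplicative (cycShift (n - 1))))) :=
  SemidirectProduct.isTorsionFree (Monoid.isTorsionFree_of_isMulTorsionFree _)
    (Monoid.isTorsionFree_of_isMulTorsionFree _)

/-- The semidirect product `ℤ^{n-1} ⋊_ψ ℤ`, where `ψ` cyclically permutes a free basis of
`ℤ^{n-1}`, is torsion-free. -/
theorem semidirect_cyclic_shift_torsionFree (n : ℕ) (hn : 2 ≤ n) :
    Monoid.IsTorsionFree
      (SemidirectProduct (Multiplicative (Fin (n - 1) → ℤ)) (Multiplicative ℤ)
        (zpowersHom _ (AddEquiv.toMultiplicative (cycShift (n - 1))))) :=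
  semidirect_cyclic_shift_torsionFree_general n
end

section
/- Let G = (Z/r)^{n−1} ⋊_ψ Z/(r(n−1)), where the generator x of Z/(r(n−1)) acts on (Z/r)^{n−1} by cyclically permuting a basis α_1,…,α_{n−1}, and let N ≅ (Z/r)^n be the subgroup generated by α_1,…,α_{n−1} and α_0 := x^{n−1} (which is central). The quotient G/N is cyclic of order n−1, and the extension 1 → N → G → Z/(n−1) → 1 splits if and only if r is coprime to n−1. -/
/-- Permutations of `Fin m` act on `(ZMod r)^m` by permuting coordinates. -/
def permMulAut (r m : ℕ) : Equiv.Perm (Fin m) →* MulAut (Multiplicative (Fin m → ZMod r)) :=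
  MonoidHom.mk' (fun σ => AddEquiv.toMultiplicative
    { Equiv.arrowCongr σ (Equiv.refl (ZMod r)) with map_add' := fun _ _ => rfl })
    (fun σ τ => by ext v; rfl)

lemma finRotate_pow_self : ∀ m : ℕ, (finRotate m) ^ m = 1
  | 0 => rfl
  | 1 => by rw [pow_one, finRotate_one]; rfl
  | (m + 2) => by
      have h : orderOf (finRotate (m + 2)) = m + 2 := by
        rw [← Equiv.Perm.lcm_cycleType, cycleType_finRotate,
          Multiset.lcm_singleton, normalize_eq]
      have h2 := pow_orderOf_eq_one (finRotate (m + 2))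
      rwa [h] at h2

/-- The homomorphism `ℤ → Aut((ZMod r)^m)` sending `1` to the cyclic shift. -/
def zShiftHom (r m : ℕ) : ℤ →+ Additive (MulAut (Multiplicative (Fin m → ZMod r))) :=
  AddMonoidHom.mk' (fun k => Additive.ofMul (permMulAut r m (finRotate m) ^ k))
    (fun a b => by rw [zpow_add]; rfl)

lemma zShiftHom_eq_zero (r m : ℕ) : zShiftHom r m ((r * m : ℕ) : ℤ) = 0 := by
  show Additive.ofMul ((permMulAut r m (finRotate m)) ^ ((r * m : ℕ) : ℤ)) = 0
  rw [zpow_natCast, pow_mul', ← map_pow, finRotate_pow_self, map_one, one_pow]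
  rfl

/-- The action of `ZMod (r*m)` on `(ZMod r)^m` in which the generator acts by the cyclic
shift of coordinates. -/
def cycleActionHom (r m : ℕ) :
    Multiplicative (ZMod (r * m)) →* MulAut (Multiplicative (Fin m → ZMod r)) :=
  AddMonoidHom.toMultiplicativeLeft (ZMod.lift (r * m) ⟨zShiftHom r m, zShiftHom_eq_zero r m⟩)

/-- The group `G = (ZMod r)^m ⋊ ZMod (r*m)`, where the generator `x` of the cyclic factor
acts by cyclically permuting the coordinates. -/
abbrev GrpG (r m : ℕ) : Type :=
  SemidirectProduct (Multiplicative (Fin m → ZMod r)) (Multiplicative (ZMod (r * m)))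
    (cycleActionHom r m)

/-- The generator `x` of the cyclic factor of `G`. -/
def xGen (r m : ℕ) : GrpG r m :=
  SemidirectProduct.inr (Multiplicative.ofAdd (1 : ZMod (r * m)))

/-- The generator `α_i` of the abelian factor of `G`. -/
def alphaGen (r m : ℕ) (i : Fin m) : GrpG r m :=
  SemidirectProduct.inl (Multiplicative.ofAdd (Pi.single i (1 : ZMod r)))

/-! Reducing the exponent of `x` modulo `n - 1` gives the projection `G → ZMod (n - 1)`, whose
kernel is generated by the `α_i` and `x^{n-1}`. The projection factors through the split quotient
`G → ZMod (r(n-1))`, so it splits iff the reduction `ZMod (r(n-1)) → ZMod (n-1)` does, i.e. iff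
some `k` with `(n-1) k ≡ 0 mod r(n-1)`, that is, some multiple of `r`, is `≡ 1 mod n-1`; such a
`k` exists iff `gcd(r, n-1) = 1`. -/

open SemidirectProduct Subgroup Multiplicative

theorem isCoprime_iff_exists_dvd_and_dvd_sub_one {R : Type*} [CommRing R] {a b : R} :
    IsCoprime a b ↔ ∃ k, a ∣ k ∧ b ∣ k - 1 := by
  constructor
  · rintro ⟨u, v, huv⟩
    exact ⟨u * a, dvd_mul_left a u, ⟨-v, by rw [← huv]; ring⟩⟩
  · rintro ⟨k, ⟨u, rfl⟩, ⟨v, hv⟩⟩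
    exact ⟨u, -v, by linear_combination hv⟩

namespace MonoidHom

variable {G H K : Type*} [Group G] [Group H] [Group K]

def HasSection (f : G →* H) : Prop :=
  ∃ s : H →* G, f.comp s = MonoidHom.id H

theorem hasSection_comp_iff {f : H →* K} {p : G →* H} {σ : H →* G}
    (hσ : p.comp σ = MonoidHom.id H) : (f.comp p).HasSection ↔ f.HasSection := by
  constructor
  · rintro ⟨s, hs⟩
    exact ⟨p.comp s, by rwa [← comp_assoc]⟩
  · rintro ⟨t, ht⟩
    exact ⟨σ.comp t, by rw [comp_assoc, ← comp_assoc t σ p, hσ, id_comp, ht]⟩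

theorem hasSection_iff_exists_pow_eq_one {m : ℕ} (f : G →* Multiplicative (ZMod m)) :
    f.HasSection ↔ ∃ g : G, g ^ m = 1 ∧ f g = ofAdd 1 := by
  constructor
  · rintro ⟨s, hs⟩
    refine ⟨s (ofAdd 1), ?_, DFunLike.congr_fun hs _⟩
    rw [← map_pow, ← ofAdd_nsmul, nsmul_one, ZMod.natCast_self, ofAdd_zero, map_one]
  · rintro ⟨g, hgm, hg⟩
    have hgm' : zmultiplesHom (Additive G) (Additive.ofMul g) m = 0 := by
      simpa using congrArg Additive.ofMul hgm
    refine ⟨AddMonoidHom.toMultiplicativeLeft (ZMod.lift m ⟨_, hgm'⟩), MonoidHom.ext fun a => ?_⟩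
    obtain ⟨j, hj⟩ := ZMod.intCast_surjective a.toAdd
    rw [← ofAdd_toAdd a, ← hj]
    simp [ZMod.lift_coe, hg, ← ofAdd_zsmul]

end MonoidHom

def castMulHom (r m : ℕ) : Multiplicative (ZMod (r * m)) →* Multiplicative (ZMod m) :=
  AddMonoidHom.toMultiplicative (ZMod.castHom (dvd_mul_left m r) (ZMod m)).toAddMonoidHom

theorem castMulHom_ofAdd_intCast (r m : ℕ) (k : ℤ) :
    castMulHom r m (ofAdd (k : ZMod (r * m))) = ofAdd (k : ZMod m) := by
  simp [castMulHom]

theorem castMulHom_surjective (r m : ℕ) : Function.Surjective (castMulHom r m) :=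
  ZMod.castHom_surjective (dvd_mul_left m r)

theorem castMulHom_hasSection_iff (r m : ℕ) [NeZero m] :
    (castMulHom r m).HasSection ↔ r.Coprime m := by
  rw [MonoidHom.hasSection_iff_exists_pow_eq_one, ← Nat.isCoprime_iff_coprime,
    isCoprime_iff_exists_dvd_and_dvd_sub_one]
  rw [(ofAdd.surjective.comp ZMod.intCast_surjective).exists]
  refine exists_congr fun k => and_congr ?_ ?_
  · have hm : (m : ℤ) ≠ 0 := by exact_mod_cast NeZero.ne m
    have hmk : m • (k : ZMod (r * m)) = ((k * m : ℤ) : ZMod (r * m)) := by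
      rw [nsmul_eq_mul]; push_cast; ring
    rw [Function.comp_apply, ← ofAdd_nsmul, ofAdd_eq_one, hmk, ZMod.intCast_zmod_eq_zero_iff_dvd,
      Nat.cast_mul, mul_dvd_mul_iff_right hm]
  · rw [Function.comp_apply, castMulHom_ofAdd_intCast, ofAdd.injective.eq_iff, eq_comm,
      ← Int.cast_one, ZMod.intCast_eq_intCast_iff_dvd_sub]

def projHom (r m : ℕ) : GrpG r m →* Multiplicative (ZMod m) :=
  (castMulHom r m).comp rightHom

theorem projHom_surjective (r m : ℕ) : Function.Surjective (projHom r m) :=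
  (castMulHom_surjective r m).comp rightHom_surjective

theorem projHom_hasSection_iff (r m : ℕ) [NeZero m] :
    (projHom r m).HasSection ↔ r.Coprime m :=
  (MonoidHom.hasSection_comp_iff rightHom_comp_inr).trans (castMulHom_hasSection_iff r m)

section Generators

variable {r m : ℕ}

theorem xGen_zpow (k : ℤ) : xGen r m ^ k = inr (ofAdd (k : ZMod (r * m))) := by
  rw [xGen, ← map_zpow, ← ofAdd_zsmul, zsmul_one]

theorem alphaGen_zpow (i : Fin m) (k : ℤ) :
    alphaGen r m i ^ k = inl (ofAdd (Pi.single i (k : ZMod r))) := by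
  rw [alphaGen, ← map_zpow, ← ofAdd_zsmul, ← Pi.single_zsmul, zsmul_one]

theorem inl_mem_closure_range_alphaGen (v : Multiplicative (Fin m → ZMod r)) :
    (inl v : GrpG r m) ∈ Subgroup.closure (Set.range (alphaGen r m)) := by
  change v ∈ (Subgroup.closure (Set.range (alphaGen r m))).comap inl
  rw [← ofAdd_toAdd v, ← Finset.univ_sum_single v.toAdd, ofAdd_sum]
  refine prod_mem fun i _ => ?_
  rw [mem_comap, ← ZMod.intCast_zmod_cast (v.toAdd i), ← alphaGen_zpow]
  exact zpow_mem (Subgroup.subset_closure (Set.mem_range_self i)) _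

theorem inr_mem_closure_xGen_pow {k : Multiplicative (ZMod (r * m))} (hk : castMulHom r m k = 1) :
    (inr k : GrpG r m) ∈ Subgroup.closure {xGen r m ^ m} := by
  obtain ⟨j, rfl⟩ : ∃ j : ℤ, ofAdd (j : ZMod (r * m)) = k :=
    (ofAdd.surjective.comp ZMod.intCast_surjective) k
  rw [castMulHom_ofAdd_intCast, ofAdd_eq_one, ZMod.intCast_zmod_eq_zero_iff_dvd] at hk
  obtain ⟨t, rfl⟩ := hk
  rw [← xGen_zpow, zpow_mul, zpow_natCast]
  exact Subgroup.mem_closure_singleton.2 ⟨t, rfl⟩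

theorem ker_projHom :
    (projHom r m).ker = Subgroup.closure ({xGen r m ^ m} ∪ Set.range (alphaGen r m)) := by
  refine le_antisymm (fun g hg => ?_) ((closure_le _).2 ?_)
  · rw [← inl_left_mul_inr_right g]
    exact mul_mem (closure_mono Set.subset_union_right (inl_mem_closure_range_alphaGen _))
      (closure_mono Set.subset_union_left (inr_mem_closure_xGen_pow hg))
  · rintro _ (rfl | ⟨i, rfl⟩)
    · rw [SetLike.mem_coe, MonoidHom.mem_ker, ← zpow_natCast, xGen_zpow, projHom,
        MonoidHom.comp_apply, rightHom_inr, castMulHom_ofAdd_intCast]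
      simp
    · simp [projHom, alphaGen]

end Generators

theorem quotient_cyclic_and_splitting_iff_coprime_general (n r : ℕ) (hn : 2 ≤ n) :
    ∃ π : GrpG r (n - 1) →* Multiplicative (ZMod (n - 1)),
      Function.Surjective π ∧
      π.ker = Subgroup.closure ({xGen r (n - 1) ^ (n - 1)} ∪ Set.range (alphaGen r (n - 1))) ∧
      ((∃ s : Multiplicative (ZMod (n - 1)) →* GrpG r (n - 1),
          π.comp s = MonoidHom.id _) ↔ Nat.Coprime r (n - 1)) := by
  have : NeZero (n - 1) := ⟨by omega⟩
  exact ⟨projHom r (n - 1), projHom_surjective r (n - 1), ker_projHom,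
    projHom_hasSection_iff r (n - 1)⟩

/-- Let `G = (ZMod r)^{n-1} ⋊ ZMod (r(n-1))` and let `N` be the subgroup generated by the
`α_i` together with `α_0 = x^{n-1}`.  Then `G/N` is cyclic of order `n-1` (i.e. there is a
surjection `π : G → ZMod (n-1)` with kernel `N`), and the extension
`1 → N → G → ZMod (n-1) → 1` splits if and only if `r` is coprime to `n-1`. -/
theorem quotient_cyclic_and_splitting_iff_coprime (n r : ℕ) (hn : 2 ≤ n) (hr : 2 ≤ r) :
    ∃ π : GrpG r (n - 1) →* Multiplicative (ZMod (n - 1)),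
      Function.Surjective π ∧
      π.ker = Subgroup.closure ({xGen r (n - 1) ^ (n - 1)} ∪ Set.range (alphaGen r (n - 1))) ∧
      ((∃ s : Multiplicative (ZMod (n - 1)) →* GrpG r (n - 1),
          π.comp s = MonoidHom.id _) ↔ Nat.Coprime r (n - 1)) :=
  quotient_cyclic_and_splitting_iff_coprime_general n r hn
end

section
/- Let n ≥ 5 and suppose A_n acts on a finite set Ω with an orbit of size n. Then the stabilizer of any point in that orbit is isomorphic to A_{n−1} and acts transitively on the other n−1 points of the orbit. -/
/-!
Since `A_n` is simple and acts nontrivially on the orbit `O`, the permutation representation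
`A_n → Sym(O)` is injective; as `|Sym(O)| = n! = 2 |A_n|`, its image has index two and is
therefore `Alt(O)`. So the action on `O` is the natural action of `Alt(O)`, in which the stabilizer
of a point is the alternating group of the remaining `n - 1` points and which is
`(n - 2)`-transitive, in particular `2`-transitive.
-/

open Equiv Equiv.Perm MulAction

namespace MulAction

variable {G H β : Type*} [Group G] [Group H] [MulAction G β] [MulAction H β]

theorem stabilizer_orbit_mk {Ω : Type*} [MulAction G Ω] {ω x : Ω} (hx : x ∈ orbit G ω) :
    stabilizer G (⟨x, hx⟩ : orbit G ω) = stabilizer G x := by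
  ext g
  simp [mem_stabilizer_iff, Subtype.ext_iff, orbit.coe_smul]

theorem toPermHom_injective_of_isSimpleGroup [IsSimpleGroup G] [IsPretransitive G β]
    [Nontrivial β] : Function.Injective (toPermHom G β) := by
  rw [← MonoidHom.ker_eq_bot_iff]
  refine (MonoidHom.normal_ker _).eq_bot_or_eq_top.resolve_right fun hker => ?_
  obtain ⟨a, b, hab⟩ := exists_pair_ne β
  obtain ⟨g, rfl⟩ := exists_smul_eq G a b
  have hg : toPermHom G β g = 1 := MonoidHom.mem_ker.1 (hker ▸ Subgroup.mem_top g)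
  exact hab (DFunLike.congr_fun hg a).symm

theorem isMultiplyPretransitive_of_mulEquiv (ψ : G ≃* H) (hψ : ∀ g (b : β), ψ g • b = g • b)
    {k : ℕ} [IsMultiplyPretransitive H β k] : IsMultiplyPretransitive G β k where
  exists_smul_eq x y := by
    obtain ⟨h, hh⟩ := exists_smul_eq H x y
    refine ⟨ψ.symm h, ?_⟩
    ext i
    simp [← hh, Function.Embedding.smul_apply, ← hψ]

end MulAction

def MulEquiv.stabilizerCongr {G H β : Type*} [Group G] [Group H] [MulAction G β]
    [MulAction H β] (ψ : G ≃* H) (hψ : ∀ g (b : β), ψ g • b = g • b) (b : β) :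
    stabilizer G b ≃* stabilizer H b :=
  (ψ.subgroupMap _).trans <| MulEquiv.subgroupCongr <| by
    ext h
    obtain ⟨g, rfl⟩ := ψ.surjective h
    simp [mem_stabilizer_iff, hψ]

theorem MonoidHom.range_eq_alternatingGroup_of_injective {G β : Type*} [Group G] [Fintype β]
    [DecidableEq β] {φ : G →* Perm β} (hφ : Function.Injective φ)
    (hG : 2 * Nat.card G = Nat.card (Perm β)) :
    φ.range = alternatingGroup β := by
  have : Finite G := Finite.of_injective φ hφ
  apply eq_alternatingGroup_of_index_eq_two
  have hcard : Nat.card φ.range = Nat.card G := Nat.card_congr (ofInjective hφ).toEquiv.symm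
  have := φ.range.index_mul_card
  rw [hcard, ← hG] at this
  exact Nat.eq_of_mul_eq_mul_right Nat.card_pos this

namespace alternatingGroup

variable {α β : Type*} [Fintype α] [DecidableEq α] [Fintype β] [DecidableEq β]

theorem range_ofSubtype_compl_singleton (a : α) :
    (ofSubtype ({a}ᶜ : Finset α)).range = stabilizer (alternatingGroup α) a := by
  ext k
  rw [mem_range_ofSubtype_iff, mem_stabilizer_iff, Finset.subset_compl_singleton, notMem_support]
  rfl

noncomputable def stabilizerMulEquiv (a : α) :
    stabilizer (alternatingGroup α) a ≃* alternatingGroup ({a}ᶜ : Finset α) :=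
  ((MonoidHom.ofInjective ofSubtype_injective).trans
    (MulEquiv.subgroupCongr (range_ofSubtype_compl_singleton a))).symm

theorem nonempty_stabilizer_mulEquiv_fin {m : ℕ} (hα : Nat.card α = m) (a : α) :
    Nonempty (stabilizer (alternatingGroup α) a ≃* alternatingGroup (Fin (m - 1))) :=
  ⟨(stabilizerMulEquiv a).trans <| Equiv.altCongrHom <| Fintype.equivFinOfCardEq <| by
    simp [← hα, Nat.card_eq_fintype_card]⟩

theorem isMultiplyPretransitive_two (h4 : 4 ≤ Nat.card α) :
    IsMultiplyPretransitive (alternatingGroup α) α 2 :=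
  have := isMultiplyPretransitive α
  isMultiplyPretransitive_of_le (n := Nat.card α - 2) (by omega) (by omega)

theorem exists_mulEquiv_smul_eq (h5 : 5 ≤ Nat.card α) [MulAction (alternatingGroup α) β]
    [IsPretransitive (alternatingGroup α) β] (hβ : Nat.card β = Nat.card α) :
    ∃ ψ : alternatingGroup α ≃* alternatingGroup β, ∀ g (b : β), ψ g • b = g • b := by
  have := isSimpleGroup h5
  have : Nontrivial α := Finite.one_lt_card_iff_nontrivial.1 (by omega)
  have : Nontrivial β := Finite.one_lt_card_iff_nontrivial.1 (by omega)
  have hinj := toPermHom_injective_of_isSimpleGroup (G := alternatingGroup α) (β := β)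
  have hrange := MonoidHom.range_eq_alternatingGroup_of_injective hinj <| by
    rw [two_mul_nat_card_alternatingGroup, Nat.card_perm, Nat.card_perm, hβ]
  exact ⟨(MonoidHom.ofInjective hinj).trans (MulEquiv.subgroupCongr hrange), fun _ _ => rfl⟩

end alternatingGroup

/-- Let `n ≥ 5` and let `A_n` act on a finite set `Ω` with an orbit of size `n`.  Then the
stabilizer of any point of that orbit is isomorphic to `A_{n-1}`, and it acts transitively
on the remaining `n - 1` points of the orbit. -/
theorem stabilizer_of_orbit_of_size_n
    (n : ℕ) (hn : 5 ≤ n) (Ω : Type) [Finite Ω]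
    [MulAction (alternatingGroup (Fin n)) Ω] (ω : Ω)
    (horb : Nat.card (MulAction.orbit (alternatingGroup (Fin n)) ω) = n) :
    ∀ x ∈ MulAction.orbit (alternatingGroup (Fin n)) ω,
      Nonempty (MulAction.stabilizer (alternatingGroup (Fin n)) x ≃*
        alternatingGroup (Fin (n - 1))) ∧
      (∀ y ∈ MulAction.orbit (alternatingGroup (Fin n)) ω \ {x},
        ∀ z ∈ MulAction.orbit (alternatingGroup (Fin n)) ω \ {x},
          ∃ g ∈ MulAction.stabilizer (alternatingGroup (Fin n)) x, g • y = z) := by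
  classical
  intro x hx
  set O := orbit (alternatingGroup (Fin n)) ω
  have : Fintype O := Fintype.ofFinite O
  obtain ⟨ψ, hψ⟩ := alternatingGroup.exists_mulEquiv_smul_eq (α := Fin n) (β := O)
    (by simpa using hn) (by simpa using horb)
  refine ⟨?_, ?_⟩
  · rw [← stabilizer_orbit_mk hx]
    obtain ⟨e⟩ := alternatingGroup.nonempty_stabilizer_mulEquiv_fin horb ⟨x, hx⟩
    exact ⟨(ψ.stabilizerCongr hψ _).trans e⟩
  · rintro y ⟨hy, hyx⟩ z ⟨hz, hzx⟩
    have := alternatingGroup.isMultiplyPretransitive_two (α := O) (by omega)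
    have := isMultiplyPretransitive_of_mulEquiv ψ hψ (k := 2)
    have hxy : (⟨x, hx⟩ : O) ≠ ⟨y, hy⟩ := by simpa [Subtype.ext_iff, eq_comm] using hyx
    have hxz : (⟨x, hx⟩ : O) ≠ ⟨z, hz⟩ := by simpa [Subtype.ext_iff, eq_comm] using hzx
    obtain ⟨g, hgx, hgy⟩ := is_two_pretransitive_iff.1 this hxy hxz
    exact ⟨g, congrArg Subtype.val hgx, congrArg Subtype.val hgy⟩
end

section
/- Let n ≥ 3 and s, t, r be integers with s(n−1) + tr = 1. With P_{ij}, Λ_{ij} the affine maps of Z^n defined by P_{ij}(v) = (I+E_{ji})v and Λ_{ij}(v) = (I+E_{ji})v − s e_j, the commutator identity [Λ_{12}^{-1}, Λ_{23}^{-1}] = Λ_{13}^{-1} holds in the group of affine transformations of Z^n. -/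
/-- The shear `v ↦ (I + E_{ji}) v` of `ℤ^n` (adding the `i`-th coordinate to the `j`-th),
as a bijection of `ℤ^n`. -/
def shear (n : ℕ) (i j : Fin n) (h : i ≠ j) : Equiv.Perm (Fin n → ℤ) where
  toFun v := fun k => v k + (if k = j then v i else 0)
  invFun v := fun k => v k - (if k = j then v i else 0)
  left_inv v := by
    funext k
    by_cases hk : k = j <;> simp [hk, h, h.symm]
  right_inv v := by
    funext k
    by_cases hk : k = j <;> simp [hk, h, h.symm]

/-- The affine transformation `P_{ij} : v ↦ (I + E_{ji}) v`. -/
def Pmap (n : ℕ) (i j : Fin n) (h : i ≠ j) : Equiv.Perm (Fin n → ℤ) := shear n i j h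

/-- The affine transformation `Λ_{ij} : v ↦ (I + E_{ji}) v - s e_j`. -/
def Lmap (n : ℕ) (s : ℤ) (i j : Fin n) (h : i ≠ j) : Equiv.Perm (Fin n → ℤ) :=
  Equiv.addLeft (-(Pi.single j s)) * shear n i j h

open scoped commutatorElement

/-! `Λ_{ij}⁻¹` is the map `v ↦ v + (s - v_i) e_j`, which reads only coordinate `i` and changes
only coordinate `j`. Following `v` through the four factors of `[Λ_{ij}⁻¹, Λ_{jk}⁻¹]` for distinct
`i, j, k`, the two `e_j`-corrections cancel and the `e_k`-corrections add up to `(s - v_i) e_k`. -/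

section Lmap

variable {n : ℕ} (s : ℤ) {i j k : Fin n}

theorem Lmap_apply (h : i ≠ j) (v : Fin n → ℤ) :
    Lmap n s i j h v = v + Pi.single j (v i - s) := by
  ext m
  simp only [Lmap, shear, Equiv.Perm.coe_mul, Equiv.coe_addLeft, Equiv.coe_fn_mk,
    Function.comp_apply, Pi.add_apply, Pi.neg_apply, Pi.single_apply]
  split_ifs <;> ring

theorem Lmap_inv_apply (h : i ≠ j) (v : Fin n → ℤ) :
    (Lmap n s i j h)⁻¹ v = v + Pi.single j (s - v i) := by
  rw [Equiv.Perm.inv_eq_iff_eq, Lmap_apply, Pi.add_apply, Pi.single_eq_of_ne h, add_zero,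
    add_assoc, ← Pi.single_add, sub_add_sub_cancel', sub_self, Pi.single_zero, add_zero]

theorem commutatorElement_Lmap_inv (hij : i ≠ j) (hjk : j ≠ k) (hik : i ≠ k) :
    ⁅(Lmap n s i j hij)⁻¹, (Lmap n s j k hjk)⁻¹⁆ = (Lmap n s i k hik)⁻¹ := by
  ext v : 1
  simp only [commutatorElement_def, inv_inv, Equiv.Perm.mul_apply, Lmap_apply, Lmap_inv_apply,
    Pi.add_apply, Pi.single_eq_of_ne hij, Pi.single_eq_of_ne hik, Pi.single_eq_of_ne hjk,
    Pi.single_eq_same, add_zero]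
  simp only [Pi.single_sub, Pi.single_add]
  abel

end Lmap

/-- For integers with `s(n-1) + tr = 1`, the commutator identity
`[Λ₁₂⁻¹, Λ₂₃⁻¹] = Λ₁₃⁻¹` holds in the group of affine transformations of `ℤ^n`. -/
theorem L_commutator_identity (n : ℕ) (hn : 3 ≤ n) (s : ℤ) :
    ⁅(Lmap n s ⟨0, by omega⟩ ⟨1, by omega⟩ (by simp [Fin.ext_iff]))⁻¹,
        (Lmap n s ⟨1, by omega⟩ ⟨2, by omega⟩ (by simp [Fin.ext_iff]))⁻¹⁆
      = (Lmap n s ⟨0, by omega⟩ ⟨2, by omega⟩ (by simp [Fin.ext_iff]))⁻¹ :=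
  commutatorElement_Lmap_inv s _ _ _
end
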